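/- Let C be a symmetric monoidal category and let A be a bicommutative bimonoid in C. Then the set End(A) of bimonoid endomorphisms of A is a semiring, with addition given by convolution f + g := Δ_A ≫ (f ⊗ g) ≫ μ_A, additive identity 0 := ε_A ≫ η_A, multiplication given by composition, and multiplicative identity id_A. -/

import Mathlib

open CategoryTheory MonoidalCategory

universe v u

variable {C : Type u} [Category.{v} C] [MonoidalCategory C]

/-- A bicommutative bimonoid in a braided monoidal category: an object `X` together with a
commutative monoid structure `(μ, η)` and a cocommutative comonoid structure `(Δ, ε)` such
that `Δ` and `ε` are monoid homomorphisms. -/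
structure IsBicommBimon [BraidedCategory C] (X : C) (μ : X ⊗ X ⟶ X) (η : 𝟙_ C ⟶ X)
    (Δ : X ⟶ X ⊗ X) (ε : X ⟶ 𝟙_ C) : Prop where
  mul_assoc : (μ ▷ X) ≫ μ = (α_ X X X).hom ≫ (X ◁ μ) ≫ μ
  one_mul : (η ▷ X) ≫ μ = (λ_ X).hom
  mul_one : (X ◁ η) ≫ μ = (ρ_ X).hom
  mul_comm : (β_ X X).hom ≫ μ = μ
  comul_assoc : Δ ≫ (X ◁ Δ) = Δ ≫ (Δ ▷ X) ≫ (α_ X X X).hom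
  counit_comul : Δ ≫ (ε ▷ X) = (λ_ X).inv
  comul_counit : Δ ≫ (X ◁ ε) = (ρ_ X).inv
  comul_comm : Δ ≫ (β_ X X).hom = Δ
  mul_comul : μ ≫ Δ = (Δ ⊗ₘ Δ) ≫ tensorμ X X X X ≫ (μ ⊗ₘ μ)
  one_comul : η ≫ Δ = (λ_ (𝟙_ C)).inv ≫ (η ⊗ₘ η)
  mul_counit : μ ≫ ε = (ε ⊗ₘ ε) ≫ (λ_ (𝟙_ C)).hom
  one_counit : η ≫ ε = 𝟙 (𝟙_ C)

/-- A bimonoid homomorphism: a morphism commuting with multiplication, unit,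
comultiplication and counit. -/
structure IsBimonHom {A B : C}
    (μA : A ⊗ A ⟶ A) (ηA : 𝟙_ C ⟶ A) (ΔA : A ⟶ A ⊗ A) (εA : A ⟶ 𝟙_ C)
    (μB : B ⊗ B ⟶ B) (ηB : 𝟙_ C ⟶ B) (ΔB : B ⟶ B ⊗ B) (εB : B ⟶ 𝟙_ C)
    (f : A ⟶ B) : Prop where
  hom_mul : μA ≫ f = (f ⊗ₘ f) ≫ μB
  hom_one : ηA ≫ f = ηB
  hom_comul : f ≫ ΔB = ΔA ≫ (f ⊗ₘ f)
  hom_counit : f ≫ εB = εA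

/-!
Convolution `f + g = Δ ≫ (f ⊗ g) ≫ μ` is the product of Mathlib's convolution monoid `Conv A A`,
which gives associativity and the unit `ε ≫ η`; cocommutativity of `Δ` and commutativity of `μ`
make it commutative. Bimonoid endomorphisms are closed under convolution: the bimonoid axiom
`μ ≫ Δ = (Δ ⊗ Δ) ≫ tensorμ ≫ (μ ⊗ μ)` moves `f + g` past `μ` (resp. `Δ`), and the middle-four
interchange `tensorμ` that appears is absorbed by commutativity of `μ` (resp. cocommutativity of
`Δ`, which is the same fact in `Cᵒᵖ`). Composition distributes over convolution because a bimonoid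
endomorphism is a monoid morphism on one side and a comonoid morphism on the other, and `ε ≫ η`
is absorbing because bimonoid morphisms preserve `η` and `ε`.
-/

namespace CategoryTheory

open scoped _root_.CategoryTheory.MonObj _root_.CategoryTheory.ComonObj

theorem MonObj.one_tensorHom_one_mul (M : C) [MonObj M] :
    (η[M] ⊗ₘ η[M]) ≫ μ[M] = (λ_ (𝟙_ C)).hom ≫ η[M] := by
  rw [tensorHom_def', Category.assoc, MonObj.one_mul, leftUnitor_naturality]

theorem ComonObj.comul_counit_tensorHom_counit (M : C) [ComonObj M] :
    Δ[M] ≫ (ε[M] ⊗ₘ ε[M]) = ε[M] ≫ (λ_ (𝟙_ C)).inv := by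
  rw [MonoidalCategory.tensorHom_def, ComonObj.counit_comul_assoc, leftUnitor_inv_naturality]

variable {M N : C}

namespace Conv

variable [ComonObj M] [MonObj N]

theorem mul_eq_tensorHom (f g : Conv M N) : f * g = Δ[M] ≫ (f ⊗ₘ g) ≫ μ[N] := by
  -- `rw` does not see through the type synonym `Conv M N`, so rewrite at type `M ⟶ N`.
  have key (f g : M ⟶ N) : Δ[M] ≫ f ▷ M ≫ N ◁ g ≫ μ[N] = Δ[M] ≫ (f ⊗ₘ g) ≫ μ[N] := by
    rw [MonoidalCategory.tensorHom_def, Category.assoc]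
  exact key f g

theorem mul_assoc_tensorHom (f g h : Conv M N) :
    Δ[M] ≫ ((Δ[M] ≫ (f ⊗ₘ g) ≫ μ[N]) ⊗ₘ h) ≫ μ[N] =
      Δ[M] ≫ (f ⊗ₘ (Δ[M] ≫ (g ⊗ₘ h) ≫ μ[N])) ≫ μ[N] := by
  have := mul_assoc f g h
  rwa [mul_eq_tensorHom (f * g), mul_eq_tensorHom f (g * h), mul_eq_tensorHom f g,
    mul_eq_tensorHom g h] at this

theorem one_mul_tensorHom (f : Conv M N) : Δ[M] ≫ ((ε[M] ≫ η[N]) ⊗ₘ f) ≫ μ[N] = f := by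
  have := one_mul f
  rwa [mul_eq_tensorHom 1 f, one_eq] at this

theorem mul_one_tensorHom (f : Conv M N) : Δ[M] ≫ (f ⊗ₘ (ε[M] ≫ η[N])) ≫ μ[N] = f := by
  have := mul_one f
  rwa [mul_eq_tensorHom f 1, one_eq] at this

end Conv

variable [BraidedCategory C]

theorem ComonObj.comul_comul_comul_comm (M : C) [ComonObj M] [IsCommComonObj M] :
    Δ[M] ≫ (Δ[M] ⊗ₘ Δ[M]) ≫ tensorμ M M M M = Δ[M] ≫ (Δ[M] ⊗ₘ Δ[M]) := by
  let := Comon.ComonToMonOpOpObjMon (Comon.mk M)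
  have : IsCommMonObj (Opposite.op M) := ⟨Quiver.Hom.unop_inj (IsCommComonObj.comul_comm M)⟩
  have := congrArg Quiver.Hom.unop (MonObj.mul_mul_mul_comm (Opposite.op M))
  simp only [unop_comp, unop_tensorHom, BraidedCategory.unop_tensorμ, Category.assoc] at this
  exact this

theorem comul_tensorHom_mul_comm [ComonObj M] [IsCommComonObj M] [MonObj N] [IsCommMonObj N]
    (f g : M ⟶ N) : Δ[M] ≫ (f ⊗ₘ g) ≫ μ[N] = Δ[M] ≫ (g ⊗ₘ f) ≫ μ[N] := by
  conv_lhs => rw [← IsCommComonObj.comul_comm M, Category.assoc,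
    ← BraidedCategory.braiding_naturality_assoc, IsCommMonObj.mul_comm]

instance isMonHom_comul_tensorHom_mul [BimonObj M] [MonObj N] [IsCommMonObj N] (f g : M ⟶ N)
    [IsMonHom f] [IsMonHom g] : IsMonHom (Δ[M] ≫ (f ⊗ₘ g) ≫ μ[N]) where
  one_hom := by
    rw [Bimon.one_comul_assoc, tensorHom_comp_tensorHom_assoc, IsMonHom.one_hom, IsMonHom.one_hom,
      MonObj.one_tensorHom_one_mul, Iso.inv_hom_id_assoc]
  mul_hom := by
    rw [BimonObj.mul_comul_assoc, tensorHom_comp_tensorHom_assoc, IsMonHom.mul_hom,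
      IsMonHom.mul_hom, ← tensorHom_comp_tensorHom_assoc, ← tensorμ_natural_assoc,
      MonObj.mul_mul_mul_comm]
    simp only [tensorHom_comp_tensorHom_assoc]

instance isComonHom_comul_tensorHom_mul [ComonObj M] [IsCommComonObj M] [BimonObj N]
    (f g : M ⟶ N) [IsComonHom f] [IsComonHom g] : IsComonHom (Δ[M] ≫ (f ⊗ₘ g) ≫ μ[N]) where
  hom_counit := by
    rw [Category.assoc, Category.assoc, Bimon.mul_counit, tensorHom_comp_tensorHom_assoc,
      IsComonHom.hom_counit, IsComonHom.hom_counit, ← Category.assoc,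
      ComonObj.comul_counit_tensorHom_counit, Category.assoc, Iso.inv_hom_id, Category.comp_id]
  hom_comul := by
    rw [Category.assoc, Category.assoc, BimonObj.mul_comul, tensorHom_comp_tensorHom_assoc,
      IsComonHom.hom_comul, IsComonHom.hom_comul, ← tensorHom_comp_tensorHom_assoc,
      tensorμ_natural_assoc]
    slice_lhs 1 3 => rw [ComonObj.comul_comul_comul_comm]
    simp only [Category.assoc, tensorHom_comp_tensorHom]

instance isMonHom_counit_unit [BimonObj M] [MonObj N] : IsMonHom (ε[M] ≫ η[N]) where
  one_hom := by rw [BimonObj.one_counit_assoc]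
  mul_hom := by
    rw [Bimon.mul_counit_assoc, ← tensorHom_comp_tensorHom_assoc, MonObj.one_tensorHom_one_mul]

instance isComonHom_counit_unit [ComonObj M] [BimonObj N] : IsComonHom (ε[M] ≫ η[N]) where
  hom_counit := by rw [Category.assoc, BimonObj.one_counit, Category.comp_id]
  hom_comul := by
    rw [Category.assoc, Bimon.one_comul, ← tensorHom_comp_tensorHom, ← Category.assoc Δ[M],
      ComonObj.comul_counit_tensorHom_counit, Category.assoc]

instance isBimonHom_comul_tensorHom_mul [BimonObj M] [IsCommComonObj M] [BimonObj N]
    [IsCommMonObj N] (f g : M ⟶ N) [IsBimonHom f] [IsBimonHom g] :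
    IsBimonHom (Δ[M] ≫ (f ⊗ₘ g) ≫ μ[N]) where

instance isBimonHom_counit_unit [BimonObj M] [BimonObj N] : IsBimonHom (ε[M] ≫ η[N]) where

instance isBimonHom_comp {P : C} [BimonObj M] [BimonObj N] [BimonObj P] (f : M ⟶ N) (g : N ⟶ P)
    [IsBimonHom f] [IsBimonHom g] : IsBimonHom (f ≫ g) where

theorem isBimonHom_iff [BimonObj M] [BimonObj N] (f : M ⟶ N) :
    _root_.IsBimonHom μ[M] η[M] Δ[M] ε[M] μ[N] η[N] Δ[N] ε[N] f ↔ IsBimonHom f :=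
  ⟨fun h =>
    { one_hom := h.hom_one, mul_hom := h.hom_mul, hom_counit := h.hom_counit,
      hom_comul := h.hom_comul },
    fun _ => ⟨IsMonHom.mul_hom f, IsMonHom.one_hom f, IsComonHom.hom_comul f,
      IsComonHom.hom_counit f⟩⟩

abbrev BimonEnd (M : C) [BimonObj M] := {f : M ⟶ M // IsBimonHom f}

namespace BimonEnd

variable [BimonObj M]

instance [IsCommComonObj M] [IsCommMonObj M] : Add (BimonEnd M) where
  add f g := ⟨Δ[M] ≫ (f.1 ⊗ₘ g.1) ≫ μ[M], by have := f.2; have := g.2; infer_instance⟩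

instance : Zero (BimonEnd M) where
  zero := ⟨ε[M] ≫ η[M], inferInstance⟩

instance : Mul (BimonEnd M) where
  mul f g := ⟨g.1 ≫ f.1, by have := f.2; have := g.2; infer_instance⟩

instance : One (BimonEnd M) where
  one := ⟨𝟙 M, {}⟩

@[simp]
theorem val_add [IsCommComonObj M] [IsCommMonObj M] (f g : BimonEnd M) :
    (f + g).1 = Δ[M] ≫ (f.1 ⊗ₘ g.1) ≫ μ[M] := rfl

@[simp]
theorem val_zero : (0 : BimonEnd M).1 = ε[M] ≫ η[M] := rfl

@[simp]
theorem val_mul (f g : BimonEnd M) : (f * g).1 = g.1 ≫ f.1 := rfl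

@[simp]
theorem val_one : (1 : BimonEnd M).1 = 𝟙 M := rfl

instance [IsCommComonObj M] [IsCommMonObj M] : AddCommMonoid (BimonEnd M) where
  add_assoc f g h := Subtype.ext (Conv.mul_assoc_tensorHom f.1 g.1 h.1)
  zero_add f := Subtype.ext (Conv.one_mul_tensorHom f.1)
  add_zero f := Subtype.ext (Conv.mul_one_tensorHom f.1)
  add_comm f g := Subtype.ext (comul_tensorHom_mul_comm f.1 g.1)
  nsmul := nsmulRec

instance : Monoid (BimonEnd M) where
  mul_assoc f g h := Subtype.ext (Category.assoc h.1 g.1 f.1).symm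
  one_mul f := Subtype.ext (Category.comp_id f.1)
  mul_one f := Subtype.ext (Category.id_comp f.1)

instance [IsCommComonObj M] [IsCommMonObj M] : Semiring (BimonEnd M) where
  left_distrib f g h := Subtype.ext (by have := f.2; simp)
  right_distrib f g h := Subtype.ext (by have := h.2; simp)
  zero_mul f := Subtype.ext (by have := f.2; simp)
  mul_zero f := Subtype.ext (by have := f.2; simp)

end BimonEnd

end CategoryTheory

abbrev IsBicommBimon.bimonObj [BraidedCategory C] {A : C} {μ : A ⊗ A ⟶ A} {η : 𝟙_ C ⟶ A}
    {Δ : A ⟶ A ⊗ A} {ε : A ⟶ 𝟙_ C} (hA : IsBicommBimon A μ η Δ ε) : BimonObj A where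
  one := η
  mul := μ
  one_mul := hA.one_mul
  mul_one := hA.mul_one
  mul_assoc := hA.mul_assoc
  counit := ε
  comul := Δ
  counit_comul := hA.counit_comul
  comul_counit := hA.comul_counit
  comul_assoc := hA.comul_assoc
  mul_comul := hA.mul_comul
  one_comul := hA.one_comul
  mul_counit := hA.mul_counit
  one_counit := hA.one_counit

/-- **The bimonoid endomorphisms of a bicommutative bimonoid form a semiring.**
Let `C` be a symmetric monoidal category and `A` a bicommutative bimonoid in `C`.  Then the
set `End(A)` of bimonoid endomorphisms of `A` carries a semiring structure with addition
given by convolution `f + g := Δ ≫ (f ⊗ g) ≫ μ`, additive identity `0 := ε ≫ η`,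
multiplication given by composition, and multiplicative identity `id_A`. -/
theorem bimonEnd_semiring [SymmetricCategory C] {A : C}
    (μ : A ⊗ A ⟶ A) (η : 𝟙_ C ⟶ A) (Δ : A ⟶ A ⊗ A) (ε : A ⟶ 𝟙_ C)
    (hA : IsBicommBimon A μ η Δ ε) :
    ∃ s : Semiring {f : A ⟶ A // IsBimonHom μ η Δ ε μ η Δ ε f},
      (∀ f g : {f : A ⟶ A // IsBimonHom μ η Δ ε μ η Δ ε f},
        (s.add f g).1 = Δ ≫ (f.1 ⊗ₘ g.1) ≫ μ) ∧
      s.zero.1 = ε ≫ η ∧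
      (∀ f g : {f : A ⟶ A // IsBimonHom μ η Δ ε μ η Δ ε f},
        (s.mul f g).1 = g.1 ≫ f.1) ∧
      s.one.1 = 𝟙 A := by
  let := hA.bimonObj
  have : IsCommMonObj A := ⟨hA.mul_comm⟩
  have : IsCommComonObj A := ⟨hA.comul_comm⟩
  exact ⟨(Equiv.subtypeEquivRight CategoryTheory.isBimonHom_iff).semiring,
    fun _ _ => rfl, rfl, fun _ _ => rfl, rfl⟩
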